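/- arXiv:2008.07055 — 5 statements merged into one kernel-verified Lean document; each statement's English description precedes it below -/
import Mathlib

section
/- Let y ∈ {−1,1}, let ȳ ∈ ℝ, let Y be uniformly distributed on (−1,1), and set ŷ := sign(ȳ − Y). Then 2·E[L₀₁(y, ŷ)] ≤ Lₕᵢ(y, ȳ), where L₀₁(y,ŷ) = 1 if y ≠ ŷ and 0 otherwise, and Lₕᵢ(y,ȳ) = max(0, 1 − y·ȳ) is the hinge loss. -/
open MeasureTheory

noncomputable def sgn (t : ℝ) : ℝ := if 0 ≤ t then 1 else -1

noncomputable def zeroOneLoss (y yhat : ℝ) : ℝ := if y = yhat then 0 else 1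

noncomputable def hingeLoss (y ybar : ℝ) : ℝ := max 0 (1 - y * ybar)

/-! The prediction `sgn (ȳ - t)` misses the label `y = ±1` only if `y * ȳ ≤ y * t`, so the
integrand is dominated by the indicator of that half-line. Inside `(-1, 1)` the half-line is an
interval of length at most `max 0 (1 - y * ȳ)`, which is the hinge loss. -/

lemma sgn_sub_eq_of_mul_lt {y : ℝ} (hy : y = 1 ∨ y = -1) {ybar t : ℝ} (h : y * t < y * ybar) :
    sgn (ybar - t) = y := by
  unfold sgn
  rcases hy with rfl | rfl
  · rw [if_pos (by linarith)]
  · rw [if_neg (by linarith)]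

lemma zeroOneLoss_nonneg (y yhat : ℝ) : 0 ≤ zeroOneLoss y yhat := by
  unfold zeroOneLoss; split_ifs <;> norm_num

lemma zeroOneLoss_sgn_le_indicator {y : ℝ} (hy : y = 1 ∨ y = -1) (ybar t : ℝ) :
    zeroOneLoss y (sgn (ybar - t)) ≤ {s : ℝ | y * ybar ≤ y * s}.indicator 1 t := by
  simp only [Set.indicator_apply, Set.mem_ofPred_eq, Pi.one_apply]
  split_ifs with ht
  · rw [zeroOneLoss]; split_ifs <;> norm_num
  · rw [zeroOneLoss, sgn_sub_eq_of_mul_lt hy (not_le.mp ht), if_pos rfl]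

lemma volume_halfLine_inter_Ioo_le {y : ℝ} (hy : y = 1 ∨ y = -1) (c : ℝ) :
    volume ({s : ℝ | c ≤ y * s} ∩ Set.Ioo (-1) 1) ≤ ENNReal.ofReal (1 - c) := by
  rcases hy with rfl | rfl
  · calc volume ({s : ℝ | c ≤ 1 * s} ∩ Set.Ioo (-1) 1)
        ≤ volume (Set.Icc c 1) :=
          measure_mono fun s ⟨hc, _, hs⟩ => ⟨by simpa using hc, hs.le⟩
      _ = ENNReal.ofReal (1 - c) := Real.volume_Icc
  · calc volume ({s : ℝ | c ≤ -1 * s} ∩ Set.Ioo (-1) 1)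
        ≤ volume (Set.Icc (-1) (-c)) :=
          measure_mono fun s ⟨hc, hs, _⟩ =>
            ⟨hs.le, by rw [Set.mem_ofPred_eq] at hc; linarith⟩
      _ = ENNReal.ofReal (1 - c) := by rw [Real.volume_Icc]; ring_nf

lemma hingeLoss_eq_toReal_ofReal (y ybar : ℝ) :
    hingeLoss y ybar = (ENNReal.ofReal (1 - y * ybar)).toReal := by
  rw [ENNReal.toReal_ofReal', hingeLoss, max_comm]

/-- With `Y ~ Uniform(-1,1)` and `ŷ = sign(ȳ - Y)`, twice the expected zero-one
loss is bounded by the hinge loss. -/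
theorem expected_zero_one_le_hinge (y : ℝ) (hy : y = 1 ∨ y = -1) (ybar : ℝ) :
    2 * ((2:ℝ)⁻¹ * ∫ t in Set.Ioo (-1:ℝ) 1, zeroOneLoss y (sgn (ybar - t)))
      ≤ hingeLoss y ybar := by
  set S := {s : ℝ | y * ybar ≤ y * s}
  have hS : MeasurableSet S :=
    measurableSet_le measurable_const (measurable_const.mul measurable_id)
  rw [← mul_assoc, mul_inv_cancel₀ two_ne_zero, one_mul, hingeLoss_eq_toReal_ofReal]
  calc ∫ t in Set.Ioo (-1:ℝ) 1, zeroOneLoss y (sgn (ybar - t))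
      ≤ ∫ t in Set.Ioo (-1:ℝ) 1, S.indicator 1 t :=
        integral_mono_of_nonneg (.of_forall fun _ => zeroOneLoss_nonneg _ _)
          ((integrable_const 1).indicator hS) (.of_forall (zeroOneLoss_sgn_le_indicator hy ybar))
    _ = (volume (S ∩ Set.Ioo (-1) 1)).toReal := by
        rw [integral_indicator_one hS, measureReal_def, Measure.restrict_apply hS]
    _ ≤ (ENNReal.ofReal (1 - y * ybar)).toReal :=
        ENNReal.toReal_mono ENNReal.ofReal_ne_top (volume_halfLine_inter_Ioo_le hy _)
end

section
/- Let H be a real inner product space, η > 0, γ > 0, and let w, z ∈ H. Define w' := P_γ(w − η z), where P_γ is the projection onto the closed origin-centered ball of radius γ. Then for any u with ‖u‖ ≤ γ, ⟨w − u, z⟩ ≤ (1/(2η))·(‖w − u‖² − ‖w' − u‖² + η²‖z‖²). -/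
open RealInnerProductSpace

noncomputable def ballProj {H : Type*} [NormedAddCommGroup H] [InnerProductSpace ℝ H]
    (γ : ℝ) (w : H) : H :=
  if ‖w‖ ≤ γ then w else (γ / ‖w‖) • w

/-!
Projection onto the ball is nonexpansive towards any point `u` of the ball, so
`‖w' - u‖² ≤ ‖w - η z - u‖² = ‖w - u‖² - 2η⟪w - u, z⟫ + η²‖z‖²`; rearranging gives the claim.
-/

section

variable {H : Type*} [NormedAddCommGroup H] [InnerProductSpace ℝ H]

lemma norm_smul_sub_le_norm_sub {v u : H} {t : ℝ} (ht1 : t ≤ 1)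
    (hvu : ⟪v, u⟫ ≤ t * ‖v‖ ^ 2) : ‖t • v - u‖ ≤ ‖v - u‖ := by
  have hscaled : ‖t • v - u‖ ^ 2 = t ^ 2 * ‖v‖ ^ 2 - 2 * t * ⟪v, u⟫ + ‖u‖ ^ 2 := by
    rw [norm_sub_sq_real, norm_smul, real_inner_smul_left, Real.norm_eq_abs, mul_pow, sq_abs]
    ring
  have hdiff : ‖v - u‖ ^ 2 - ‖t • v - u‖ ^ 2
      = (1 - t) ^ 2 * ‖v‖ ^ 2 + 2 * (1 - t) * (t * ‖v‖ ^ 2 - ⟪v, u⟫) := by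
    rw [hscaled, norm_sub_sq_real]
    ring
  have hnonneg : 0 ≤ (1 - t) ^ 2 * ‖v‖ ^ 2 + 2 * (1 - t) * (t * ‖v‖ ^ 2 - ⟪v, u⟫) := by
    have : 0 ≤ 1 - t := by linarith
    have : 0 ≤ t * ‖v‖ ^ 2 - ⟪v, u⟫ := by linarith
    positivity
  exact (pow_le_pow_iff_left₀ (norm_nonneg _) (norm_nonneg _) two_ne_zero).mp (by linarith)

lemma norm_ballProj_sub_le {γ : ℝ} {u : H} (hu : ‖u‖ ≤ γ) (v : H) :
    ‖ballProj γ v - u‖ ≤ ‖v - u‖ := by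
  unfold ballProj
  split_ifs with hv
  · exact le_rfl
  · replace hv : γ < ‖v‖ := not_le.mp hv
    have hv0 : 0 < ‖v‖ := (norm_nonneg u).trans_lt (hu.trans_lt hv)
    refine norm_smul_sub_le_norm_sub ((div_le_one hv0).mpr hv.le) ?_
    calc ⟪v, u⟫ ≤ ‖v‖ * ‖u‖ := real_inner_le_norm v u
      _ ≤ ‖v‖ * γ := by gcongr
      _ = γ / ‖v‖ * ‖v‖ ^ 2 := by field_simp

end

theorem ogd_step_inequality_general {H : Type*} [NormedAddCommGroup H] [InnerProductSpace ℝ H]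
    (η γ : ℝ) (hη : 0 < η) (w z u : H) (hu : ‖u‖ ≤ γ) :
    ⟪w - u, z⟫ ≤
      (1 / (2 * η)) * (‖w - u‖ ^ 2 - ‖ballProj γ (w - η • z) - u‖ ^ 2 + η ^ 2 * ‖z‖ ^ 2) := by
  have hproj : ‖ballProj γ (w - η • z) - u‖ ^ 2 ≤ ‖w - η • z - u‖ ^ 2 := by
    gcongr
    exact norm_ballProj_sub_le hu _
  have hstep : ‖w - η • z - u‖ ^ 2 = ‖w - u‖ ^ 2 - 2 * η * ⟪w - u, z⟫ + η ^ 2 * ‖z‖ ^ 2 := by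
    rw [sub_right_comm, norm_sub_sq_real, real_inner_smul_right, norm_smul, Real.norm_eq_abs,
      mul_pow, sq_abs]
    ring
  rw [one_div_mul_eq_div, le_div_iff₀ (by positivity)]
  linarith

theorem ogd_step_inequality {H : Type*} [NormedAddCommGroup H] [InnerProductSpace ℝ H]
    (η γ : ℝ) (hη : 0 < η) (hγ : 0 < γ) (w z u : H) (hu : ‖u‖ ≤ γ) :
    ⟪w - u, z⟫ ≤
      (1 / (2 * η)) * (‖w - u‖ ^ 2 - ‖ballProj γ (w - η • z) - u‖ ^ 2 + η ^ 2 * ‖z‖ ^ 2) :=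
  ogd_step_inequality_general η γ hη w z u hu
end

section
/- Online gradient descent for hinge loss: Let H be a real inner product space, and let x₁,…,x_T ∈ H and y₁,…,y_T ∈ {−1,1} with ‖x_t‖ ≤ X for all t. Fix U > 0 and set η = U/(X√T). Define w₁ = 0 and iteratively w_{t+1} = P_γ(w_t − η z_t) where z_t = −y_t x_t·[1 − y_t⟨w_t, x_t⟩ ≥ 0] and γ = U. Then for every u with ‖u‖ ≤ U, the sum over t = 1..T of (Lₕᵢ(y_t, ⟨w_t, x_t⟩) − Lₕᵢ(y_t, ⟨u, x_t⟩)) is at most √(U² X² T), where Lₕᵢ(y, ȳ) = max(0, 1 − y ȳ). -/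
open RealInnerProductSpace

lemma ballProj_contract {H : Type*} [NormedAddCommGroup H] [InnerProductSpace ℝ H]
    (γ : ℝ) (hγ : 0 ≤ γ) (v u : H) (hu : ‖u‖ ≤ γ) :
    ‖ballProj γ v - u‖ ≤ ‖v - u‖ := by
  unfold ballProj
  split_ifs with h
  · exact le_rfl
  · push_neg at h
    have hv : 0 < ‖v‖ := lt_of_le_of_lt hγ h
    set c : ℝ := γ / ‖v‖ with hc
    have hcv : c * ‖v‖ = γ := div_mul_cancel₀ _ (ne_of_gt hv)
    have hc0 : 0 ≤ c := div_nonneg hγ hv.le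
    have hc1 : c < 1 := (div_lt_one hv).2 h
    have hinner : ⟪v, u⟫ ≤ ‖v‖ * γ :=
      le_trans (real_inner_le_norm v u) (by nlinarith [norm_nonneg v])
    have hsq : ‖c • v - u‖ ^ 2 ≤ ‖v - u‖ ^ 2 := by
      have e1 : ‖c • v - u‖ ^ 2 = c ^ 2 * ‖v‖ ^ 2 - 2 * (c * ⟪v, u⟫) + ‖u‖ ^ 2 := by
        rw [@norm_sub_sq_real, real_inner_smul_left, norm_smul, Real.norm_eq_abs,
          mul_pow, sq_abs]
      have e2 : ‖v - u‖ ^ 2 = ‖v‖ ^ 2 - 2 * ⟪v, u⟫ + ‖u‖ ^ 2 := by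
        rw [@norm_sub_sq_real]
      rw [e1, e2]
      nlinarith [hinner, hcv, hc0, hc1, norm_nonneg v, hv]
    nlinarith [norm_nonneg (c • v - u), norm_nonneg (v - u), hsq]

/-- Online gradient descent regret bound for the hinge loss. -/
theorem ogd_hinge_regret {H : Type*} [NormedAddCommGroup H] [InnerProductSpace ℝ H]
    (T : ℕ) (x : ℕ → H) (y : ℕ → ℝ) (hy : ∀ t, y t = 1 ∨ y t = -1)
    (X U : ℝ) (hX : 0 < X) (hU : 0 < U) (hxX : ∀ t, ‖x t‖ ≤ X)
    (η : ℝ) (hη : η = U / (X * Real.sqrt T))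
    (z w : ℕ → H)
    (hz : ∀ t, z t = if 0 ≤ 1 - y t * ⟪w t, x t⟫ then (-(y t)) • x t else 0)
    (hw0 : w 0 = 0)
    (hwrec : ∀ t, w (t + 1) = ballProj U (w t - η • z t))
    (u : H) (hu : ‖u‖ ≤ U) :
    ∑ t ∈ Finset.range T, (hingeLoss (y t) ⟪w t, x t⟫ - hingeLoss (y t) ⟪u, x t⟫)
      ≤ Real.sqrt (U ^ 2 * X ^ 2 * T) := by
  rcases Nat.eq_zero_or_pos T with hT | hT
  · subst hT
    simp [Real.sqrt_nonneg]
  have hT0 : (0 : ℝ) < T := by exact_mod_cast hT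
  set s : ℝ := Real.sqrt T with hs
  have hs0 : 0 < s := Real.sqrt_pos.2 hT0
  have hs2 : s ^ 2 = T := Real.sq_sqrt hT0.le
  have hηpos : 0 < η := by
    rw [hη]; positivity
  -- bound on ‖z t‖
  have hzX : ∀ t, ‖z t‖ ≤ X := by
    intro t
    rw [hz t]
    split_ifs with h
    · rw [norm_smul, Real.norm_eq_abs]
      rcases hy t with h1 | h1 <;> simp [h1, hxX t]
    · simp [hX.le]
  -- subgradient inequality
  have hsub : ∀ t, hingeLoss (y t) ⟪w t, x t⟫ - hingeLoss (y t) ⟪u, x t⟫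
      ≤ ⟪z t, w t - u⟫ := by
    intro t
    rw [hz t]
    split_ifs with h
    · have e1 : hingeLoss (y t) ⟪w t, x t⟫ = 1 - y t * ⟪w t, x t⟫ :=
        max_eq_right h
      have e2 : 1 - y t * ⟪u, x t⟫ ≤ hingeLoss (y t) ⟪u, x t⟫ := le_max_right _ _
      have e3 : ⟪(-(y t)) • x t, w t - u⟫
          = -(y t) * (⟪w t, x t⟫ - ⟪u, x t⟫) := by
        rw [real_inner_smul_left, inner_sub_right, real_inner_comm (x t) (w t),
          real_inner_comm (x t) u]
      rw [e1, e3]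
      linarith
    · have e1 : hingeLoss (y t) ⟪w t, x t⟫ = 0 := max_eq_left (by linarith)
      have e2 : 0 ≤ hingeLoss (y t) ⟪u, x t⟫ := le_max_left _ _
      simp [e1]
      linarith
  -- one-step descent inequality
  have hstep : ∀ t, ⟪z t, w t - u⟫
      ≤ (‖w t - u‖ ^ 2 - ‖w (t + 1) - u‖ ^ 2) / (2 * η) + η / 2 * ‖z t‖ ^ 2 := by
    intro t
    have hproj : ‖w (t + 1) - u‖ ≤ ‖(w t - u) - η • z t‖ := by
      rw [hwrec t]
      have := ballProj_contract U hU.le (w t - η • z t) u hu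
      convert this using 2
      abel
    have hsq : ‖w (t + 1) - u‖ ^ 2 ≤ ‖(w t - u) - η • z t‖ ^ 2 := by
      exact pow_le_pow_left₀ (norm_nonneg _) hproj 2
    have hexp : ‖(w t - u) - η • z t‖ ^ 2
        = ‖w t - u‖ ^ 2 - 2 * (η * ⟪w t - u, z t⟫) + η ^ 2 * ‖z t‖ ^ 2 := by
      rw [@norm_sub_sq_real, real_inner_smul_right, norm_smul, Real.norm_eq_abs,
        mul_pow, sq_abs]
    rw [real_inner_comm]
    rw [hexp] at hsq
    have h2η : 0 < 2 * η := by linarith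
    rw [div_add' _ _ _ (ne_of_gt h2η), le_div_iff₀ h2η]
    nlinarith [hsq]
  -- sum everything
  have hsum : ∑ t ∈ Finset.range T, (hingeLoss (y t) ⟪w t, x t⟫ - hingeLoss (y t) ⟪u, x t⟫)
      ≤ ∑ t ∈ Finset.range T,
        ((‖w t - u‖ ^ 2 - ‖w (t + 1) - u‖ ^ 2) / (2 * η) + η / 2 * ‖z t‖ ^ 2) := by
    refine Finset.sum_le_sum fun t _ => le_trans (hsub t) (hstep t)
  have htel : ∑ t ∈ Finset.range T, (‖w t - u‖ ^ 2 - ‖w (t + 1) - u‖ ^ 2)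
      = ‖w 0 - u‖ ^ 2 - ‖w T - u‖ ^ 2 := Finset.sum_range_sub' (fun t => ‖w t - u‖ ^ 2) T
  have hzsum : ∑ t ∈ Finset.range T, ‖z t‖ ^ 2 ≤ T * X ^ 2 := by
    calc ∑ t ∈ Finset.range T, ‖z t‖ ^ 2 ≤ ∑ _t ∈ Finset.range T, X ^ 2 :=
          Finset.sum_le_sum fun t _ => pow_le_pow_left₀ (norm_nonneg _) (hzX t) 2
      _ = T * X ^ 2 := by simp [mul_comm]
  have hw0u : ‖w 0 - u‖ ^ 2 ≤ U ^ 2 := by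
    rw [hw0, zero_sub, norm_neg]
    exact pow_le_pow_left₀ (norm_nonneg _) hu 2
  have hbound : ∑ t ∈ Finset.range T,
      ((‖w t - u‖ ^ 2 - ‖w (t + 1) - u‖ ^ 2) / (2 * η) + η / 2 * ‖z t‖ ^ 2)
      ≤ U ^ 2 / (2 * η) + η / 2 * (T * X ^ 2) := by
    rw [Finset.sum_add_distrib, ← Finset.sum_div, ← Finset.mul_sum, htel]
    have h1 : (‖w 0 - u‖ ^ 2 - ‖w T - u‖ ^ 2) / (2 * η) ≤ U ^ 2 / (2 * η) := by
      apply div_le_div_of_nonneg_right _ (by linarith)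
      nlinarith [norm_nonneg (w T - u), sq_nonneg ‖w T - u‖]
    have h2 : η / 2 * ∑ t ∈ Finset.range T, ‖z t‖ ^ 2 ≤ η / 2 * (T * X ^ 2) :=
      mul_le_mul_of_nonneg_left hzsum (by linarith)
    linarith
  have hrhs : Real.sqrt (U ^ 2 * X ^ 2 * T) = U * X * s := by
    have : U ^ 2 * X ^ 2 * (T : ℝ) = (U * X * s) ^ 2 := by
      rw [mul_pow, mul_pow, hs2]
    rw [this, Real.sqrt_sq (by positivity)]
  have hfinal : U ^ 2 / (2 * η) + η / 2 * (T * X ^ 2) = U * X * s := by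
    have hT' : (T : ℝ) = s ^ 2 := hs2.symm
    rw [hη, hT']
    field_simp
    ring
  rw [hrhs]
  calc ∑ t ∈ Finset.range T, (hingeLoss (y t) ⟪w t, x t⟫ - hingeLoss (y t) ⟪u, x t⟫)
      ≤ U ^ 2 / (2 * η) + η / 2 * (T * X ^ 2) := le_trans hsum hbound
    _ = U * X * s := hfinal
end

section
/- Quasi-dimension upper bound via binary factorization: Let U ∈ {−1,1}^{p×T} admit a factorization U = U* Cᵀ where U* ∈ {−1,1}^{p×m} and C ∈ {0,1}^{T×m} is a block expansion matrix. Let M ∈ ℝ^{p×p} and N ∈ ℝ^{T×T} be symmetric positive definite, and let γ = 1/√m. Then the quasi-dimension D^γ_{M,N}(U) := inf over row-normalized P ∈ ℝ^{p×d}, Q ∈ ℝ^{T×d} with P Qᵀ = γU of [tr(Pᵀ M P)·R_M + tr(Qᵀ N Q)·R_N] satisfies D^γ_{M,N}(U) ≤ γ²·tr((U*)ᵀ M U*)·R_M + tr(Cᵀ N C)·R_N, where R_M := max_i (M⁻¹)_{ii} and R_N := max_j (N⁻¹)_{jj}. -/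
open Matrix
open scoped BigOperators

/-!
The admissible pair `P = γ • U*`, `Q = C` (with `d = m`) is row-normalized and satisfies
`P Qᵀ = γ U`; its objective is exactly the right-hand side. The infimum is finite because every
objective value is nonnegative: the traces are traces of positive semidefinite congruences and
`R_M`, `R_N` are maxima of diagonal entries of positive definite inverses.
-/

def RowNormalized {ι κ : Type*} [Fintype κ] (P : Matrix ι κ ℝ) : Prop :=
  ∀ i, ∑ k, P i k ^ 2 = 1

section RowNormalized

variable {ι κ : Type*} [Fintype κ]

lemma rowNormalized_smul_of_sign {U : Matrix ι κ ℝ} (hU : ∀ i j, U i j = 1 ∨ U i j = -1)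
    {γ : ℝ} (hγ : γ ^ 2 * Fintype.card κ = 1) : RowNormalized (γ • U) := by
  intro i
  have hsq : ∀ k, (γ • U) i k ^ 2 = γ ^ 2 := fun k => by
    rcases hU i k with h | h <;> simp [h]
  simp only [hsq, Finset.sum_const, Finset.card_univ, nsmul_eq_mul]
  linarith

lemma rowNormalized_of_zero_one {C : Matrix ι κ ℝ} (hC01 : ∀ i j, C i j = 0 ∨ C i j = 1)
    (hCrow : ∀ i, ∑ j, C i j = 1) : RowNormalized C := by
  intro i
  have hsq : ∀ k, C i k ^ 2 = C i k := fun k => by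
    rcases hC01 i k with h | h <;> simp [h]
  simpa only [hsq] using hCrow i

end RowNormalized

lemma trace_transpose_mul_mul_nonneg {n d : Type*} [Fintype n] [Fintype d]
    {A : Matrix n n ℝ} (hA : A.PosSemidef) (P : Matrix n d ℝ) : 0 ≤ (Pᵀ * A * P).trace := by
  simpa only [conjTranspose_eq_transpose_of_trivial] using
    (hA.conjTranspose_mul_mul_same P).trace_nonneg

lemma sup'_diag_inv_nonneg {n : Type*} [Fintype n] [DecidableEq n] {A : Matrix n n ℝ}
    (hA : A.PosDef) (hne : (Finset.univ : Finset n).Nonempty) :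
    0 ≤ Finset.univ.sup' hne (fun i => A⁻¹ i i) :=
  Finset.le_sup'_of_le _ (Finset.mem_univ hne.choose) hA.posSemidef.inv.diag_nonneg

lemma trace_transpose_smul_mul_smul {n d : Type*} [Fintype n] [Fintype d]
    (γ : ℝ) (A : Matrix n n ℝ) (P : Matrix n d ℝ) :
    ((γ • P)ᵀ * A * (γ • P)).trace = γ ^ 2 * (Pᵀ * A * P).trace := by
  rw [transpose_smul, smul_mul, smul_mul, Matrix.mul_smul, smul_smul, trace_smul, smul_eq_mul, sq]

theorem quasi_dimension_upper_bound_general {p T m : ℕ} (hp : 0 < p) (hT : 0 < T) (hm : 0 < m)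
    (U : Matrix (Fin p) (Fin T) ℝ)
    (Ustar : Matrix (Fin p) (Fin m) ℝ) (hUstar : ∀ i j, Ustar i j = 1 ∨ Ustar i j = -1)
    (C : Matrix (Fin T) (Fin m) ℝ)
    (hC01 : ∀ i j, C i j = 0 ∨ C i j = 1)
    (hCrow : ∀ i, ∑ j, C i j = 1)
    (hfact : U = Ustar * C.transpose)
    (M : Matrix (Fin p) (Fin p) ℝ) (N : Matrix (Fin T) (Fin T) ℝ)
    (hM : M.PosDef) (hN : N.PosDef)
    (γ RM RN : ℝ) (hγ : γ = 1 / Real.sqrt m)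
    (hRM : RM = Finset.univ.sup' (Finset.univ_nonempty_iff.mpr ⟨⟨0, hp⟩⟩) (fun i => M⁻¹ i i))
    (hRN : RN = Finset.univ.sup' (Finset.univ_nonempty_iff.mpr ⟨⟨0, hT⟩⟩) (fun j => N⁻¹ j j)) :
    sInf { c : ℝ | ∃ (d : ℕ) (P : Matrix (Fin p) (Fin d) ℝ) (Q : Matrix (Fin T) (Fin d) ℝ),
        (∀ i, ∑ k, (P i k) ^ 2 = 1) ∧ (∀ j, ∑ k, (Q j k) ^ 2 = 1) ∧
        P * Q.transpose = γ • U ∧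
        c = (P.transpose * M * P).trace * RM + (Q.transpose * N * Q).trace * RN }
      ≤ γ ^ 2 * (Ustar.transpose * M * Ustar).trace * RM + (C.transpose * N * C).trace * RN := by
  have hγm : γ ^ 2 * Fintype.card (Fin m) = 1 := by
    have hm' : (0 : ℝ) < m := Nat.cast_pos.mpr hm
    rw [hγ, Fintype.card_fin, div_pow, one_pow, Real.sq_sqrt hm'.le, one_div_mul_cancel hm'.ne']
  have hRM0 : 0 ≤ RM := hRM ▸ sup'_diag_inv_nonneg hM _
  have hRN0 : 0 ≤ RN := hRN ▸ sup'_diag_inv_nonneg hN _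
  refine csInf_le ⟨0, ?_⟩ ⟨m, γ • Ustar, C, rowNormalized_smul_of_sign hUstar hγm,
    rowNormalized_of_zero_one hC01 hCrow, by rw [smul_mul, hfact], ?_⟩
  · rintro _ ⟨d, P, Q, -, -, -, rfl⟩
    have hMP := trace_transpose_mul_mul_nonneg hM.posSemidef P
    have hNQ := trace_transpose_mul_mul_nonneg hN.posSemidef Q
    positivity
  · rw [trace_transpose_smul_mul_smul, mul_assoc]

/-- Quasi-dimension upper bound via binary factorization (Theorem `thm:itdit`). -/
theorem quasi_dimension_upper_bound {p T m : ℕ} (hp : 0 < p) (hT : 0 < T) (hm : 0 < m)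
    (U : Matrix (Fin p) (Fin T) ℝ) (hU : ∀ i j, U i j = 1 ∨ U i j = -1)
    (Ustar : Matrix (Fin p) (Fin m) ℝ) (hUstar : ∀ i j, Ustar i j = 1 ∨ Ustar i j = -1)
    (C : Matrix (Fin T) (Fin m) ℝ)
    (hC01 : ∀ i j, C i j = 0 ∨ C i j = 1)
    (hCrow : ∀ i, ∑ j, C i j = 1)
    (hCrank : C.rank = m)
    (hfact : U = Ustar * C.transpose)
    (M : Matrix (Fin p) (Fin p) ℝ) (N : Matrix (Fin T) (Fin T) ℝ)
    (hM : M.PosDef) (hN : N.PosDef)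
    (γ RM RN : ℝ) (hγ : γ = 1 / Real.sqrt m)
    (hRM : RM = Finset.univ.sup' (Finset.univ_nonempty_iff.mpr ⟨⟨0, hp⟩⟩) (fun i => M⁻¹ i i))
    (hRN : RN = Finset.univ.sup' (Finset.univ_nonempty_iff.mpr ⟨⟨0, hT⟩⟩) (fun j => N⁻¹ j j)) :
    sInf { c : ℝ | ∃ (d : ℕ) (P : Matrix (Fin p) (Fin d) ℝ) (Q : Matrix (Fin T) (Fin d) ℝ),
        (∀ i, ∑ k, (P i k) ^ 2 = 1) ∧ (∀ j, ∑ k, (Q j k) ^ 2 = 1) ∧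
        P * Q.transpose = γ • U ∧
        c = (P.transpose * M * P).trace * RM + (Q.transpose * N * Q).trace * RN }
      ≤ γ ^ 2 * (Ustar.transpose * M * Ustar).trace * RM + (C.transpose * N * C).trace * RN :=
  quasi_dimension_upper_bound_general hp hT hm U Ustar hUstar C hC01 hCrow hfact M N hM hN γ RM RN
    hγ hRM hRN
end

section
/- Specialist Hedge potential inequality: Let E be a finite set of specialists, η > 0, W ⊆ E nonempty, p : E → (0,1] with Σ_k p(k) = 1, and c : W → [0,1]. Define v(k) := p(k)/p(W) for k ∈ W where p(W) := Σ_{k∈W} p(k). Define p'(k) := p(k) for k ∉ W and p'(k) := p(k)·exp(−η c(k))·p(W)/(Σ_{k'∈W} p(k') exp(−η c(k'))) for k ∈ W. Let u : E → [0,1] be any probability distribution with u(k) > 0 wherever p(k) > 0, let u(W) := Σ_{k∈W} u(k) > 0, and ū(k) := u(k)/u(W) for k ∈ W. Then D(u‖p) − D(u‖p') ≥ u(W)·η·(⟨v, c⟩ − ⟨ū, c⟩) − u(W)·η²/2, where D(u‖p) = Σ_k u(k) log(u(k)/p(k)) and ⟨a, b⟩ = Σ_{k∈W} a(k) b(k).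 -/
/-! Off `W` the update leaves `p` unchanged, and on `W` it multiplies it by
`exp (-η c) · p(W) / Z` with `Z = ∑_{W} p exp (-η c)`; hence
`D(u‖p) - D(u‖p') = -η ∑_{W} u c - u(W) log (Z / p(W))`. The ratio `Z / p(W)` is the `v`-mean
of `exp (-η c)`, so `exp (-x) ≤ 1 - x + x² / 2`, `c ∈ [0, 1]` and `log x ≤ x - 1` give
`log (Z / p(W)) ≤ -η ⟨v, c⟩ + η² / 2`. -/

open scoped BigOperators

/-- Relative entropy (KL divergence) between finitely supported distributions. -/
noncomputable def relEnt {E : Type*} [Fintype E] (a b : E → ℝ) : ℝ :=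
  ∑ k, a k * Real.log (a k / b k)

open Finset Real

lemma Real.exp_neg_le_one_sub_add_sq_div_two {x : ℝ} (hx : 0 ≤ x) :
    exp (-x) ≤ 1 - x + x ^ 2 / 2 := by
  set f : ℝ → ℝ := fun s ↦ 1 - s + s ^ 2 / 2 - exp (-s)
  have hf (s : ℝ) : HasDerivAt f (-1 + s + exp (-s)) s := by
    refine ((((hasDerivAt_id s).const_sub 1).add ((hasDerivAt_pow 2 s).div_const 2)).sub
      (hasDerivAt_neg s).exp).congr_deriv ?_
    norm_num
  have hmono : MonotoneOn f (Set.Ici 0) :=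
    monotoneOn_of_deriv_nonneg (convex_Ici 0) (by fun_prop) (by fun_prop) fun s _ ↦ by
      rw [(hf s).deriv]; linarith [add_one_le_exp (-s)]
  have := hmono Set.self_mem_Ici hx hx
  norm_num [f] at this
  linarith

lemma sum_mul_exp_neg_mul_le {ι : Type*} (W : Finset ι) (v c : ι → ℝ)
    (hv : ∀ k ∈ W, 0 ≤ v k) (hv_sum : ∑ k ∈ W, v k = 1) (hc : ∀ k ∈ W, 0 ≤ c k ∧ c k ≤ 1)
    {η : ℝ} (hη : 0 ≤ η) :
    ∑ k ∈ W, v k * exp (-η * c k) ≤ 1 - η * ∑ k ∈ W, v k * c k + η ^ 2 / 2 := by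
  have hexp : ∀ k ∈ W, exp (-η * c k) ≤ 1 - η * c k + η ^ 2 / 2 := fun k hk ↦ by
    obtain ⟨hc0, hc1⟩ := hc k hk
    have hsq : (η * c k) ^ 2 ≤ η ^ 2 := by
      rw [mul_pow]; exact mul_le_of_le_one_right (sq_nonneg η) (pow_le_one₀ hc0 hc1)
    rw [neg_mul]
    linarith [exp_neg_le_one_sub_add_sq_div_two (mul_nonneg hη hc0)]
  calc ∑ k ∈ W, v k * exp (-η * c k)
      ≤ ∑ k ∈ W, v k * (1 - η * c k + η ^ 2 / 2) :=
        sum_le_sum fun k hk ↦ mul_le_mul_of_nonneg_left (hexp k hk) (hv k hk)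
    _ = (∑ k ∈ W, v k) - η * ∑ k ∈ W, v k * c k + (∑ k ∈ W, v k) * (η ^ 2 / 2) := by
        rw [mul_sum, sum_mul, ← sum_sub_distrib, ← sum_add_distrib]
        exact sum_congr rfl fun k _ ↦ by ring
    _ = 1 - η * ∑ k ∈ W, v k * c k + η ^ 2 / 2 := by rw [hv_sum, one_mul]

lemma log_sum_mul_exp_neg_mul_div_le {ι : Type*} (W : Finset ι) (hW : W.Nonempty) (p c : ι → ℝ)
    (hp : ∀ k ∈ W, 0 < p k) (hc : ∀ k ∈ W, 0 ≤ c k ∧ c k ≤ 1) {η : ℝ} (hη : 0 ≤ η) :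
    log ((∑ k ∈ W, p k * exp (-η * c k)) / ∑ k ∈ W, p k) ≤
      -η * ∑ k ∈ W, (p k / ∑ k' ∈ W, p k') * c k + η ^ 2 / 2 := by
  have hpW : 0 < ∑ k ∈ W, p k := sum_pos hp hW
  have hv_sum : ∑ k ∈ W, p k / ∑ k' ∈ W, p k' = 1 := by rw [← sum_div, div_self hpW.ne']
  have hmean := sum_mul_exp_neg_mul_le W (fun k ↦ p k / ∑ k' ∈ W, p k') c
    (fun k hk ↦ div_nonneg (hp k hk).le hpW.le) hv_sum hc hη
  have hZ : (∑ k ∈ W, p k * exp (-η * c k)) / ∑ k ∈ W, p k =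
      ∑ k ∈ W, (p k / ∑ k' ∈ W, p k') * exp (-η * c k) := by
    rw [sum_div]; exact sum_congr rfl fun k _ ↦ div_mul_eq_mul_div _ _ _ |>.symm
  have hZ_pos : 0 < (∑ k ∈ W, p k * exp (-η * c k)) / ∑ k ∈ W, p k :=
    div_pos (sum_pos (fun k hk ↦ mul_pos (hp k hk) (exp_pos _)) hW) hpW
  linarith [log_le_sub_one_of_pos hZ_pos]

lemma relEnt_sub_relEnt {E : Type*} [Fintype E] (u p q : E → ℝ) (hp : ∀ k, p k ≠ 0)
    (hq : ∀ k, q k ≠ 0) :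
    relEnt u p - relEnt u q = ∑ k, u k * log (q k / p k) := by
  rw [relEnt, relEnt, ← sum_sub_distrib]
  refine sum_congr rfl fun k _ ↦ ?_
  rcases eq_or_ne (u k) 0 with hu | hu
  · simp [hu]
  · rw [log_div hu (hp k), log_div hu (hq k), log_div (hq k) (hp k)]
    ring

lemma sum_mul_log_div_of_reweight {E : Type*} [Fintype E] [DecidableEq E] (W : Finset E)
    (hW : W.Nonempty) (u p w q : E → ℝ) (hp : ∀ k ∈ W, 0 < p k) (hw : ∀ k ∈ W, 0 < w k)
    (hq : ∀ k, q k = if k ∈ W then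
        p k * w k * (∑ k' ∈ W, p k') / (∑ k' ∈ W, p k' * w k') else p k) :
    ∑ k, u k * log (q k / p k) =
      ∑ k ∈ W, u k * log (w k)
        - (∑ k ∈ W, u k) * log ((∑ k ∈ W, p k * w k) / ∑ k ∈ W, p k) := by
  have hpW : 0 < ∑ k ∈ W, p k := sum_pos hp hW
  have hZ : 0 < ∑ k ∈ W, p k * w k := sum_pos (fun k hk ↦ mul_pos (hp k hk) (hw k hk)) hW
  have hoff : ∀ k ∉ W, u k * log (q k / p k) = 0 := fun k hk ↦ by
    rcases eq_or_ne (p k) 0 with h | h <;> simp [hq k, hk, h]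
  have hon : ∀ k ∈ W, u k * log (q k / p k) = u k * log (w k)
      - u k * log ((∑ k ∈ W, p k * w k) / ∑ k ∈ W, p k) := fun k hk ↦ by
    have hratio : q k / p k = w k / ((∑ k ∈ W, p k * w k) / ∑ k ∈ W, p k) := by
      rw [hq k, if_pos hk]
      field_simp [(hp k hk).ne']
    rw [hratio, log_div (hw k hk).ne' (by positivity), mul_sub]
  rw [← sum_subset (subset_univ W) fun k _ hk ↦ hoff k hk, sum_congr rfl hon, sum_sub_distrib,
    sum_mul]

theorem specialist_hedge_potential_general {E : Type*} [Fintype E] [DecidableEq E]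
    (η : ℝ) (hη : 0 < η)
    (W : Finset E) (hW : W.Nonempty)
    (p : E → ℝ) (hp_pos : ∀ k, 0 < p k)
    (c : E → ℝ) (hc : ∀ k ∈ W, 0 ≤ c k ∧ c k ≤ 1)
    (u : E → ℝ)
    (huW : 0 < ∑ k ∈ W, u k)
    (p' : E → ℝ)
    (hp' : ∀ k, p' k = if k ∈ W then
        p k * Real.exp (-η * c k) * (∑ k' ∈ W, p k') /
          (∑ k' ∈ W, p k' * Real.exp (-η * c k'))
      else p k) :
    relEnt u p - relEnt u p' ≥
      (∑ k ∈ W, u k) * η *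
          ((∑ k ∈ W, (p k / ∑ k' ∈ W, p k') * c k)
            - ∑ k ∈ W, (u k / ∑ k' ∈ W, u k') * c k)
        - (∑ k ∈ W, u k) * η ^ 2 / 2 := by
  have hp'_pos : ∀ k, 0 < p' k := fun k ↦ by
    have hpW : 0 < ∑ k ∈ W, p k := sum_pos (fun k _ ↦ hp_pos k) hW
    have hZ : 0 < ∑ k ∈ W, p k * exp (-η * c k) :=
      sum_pos (fun k _ ↦ mul_pos (hp_pos k) (exp_pos _)) hW
    rw [hp' k]; split_ifs
    · have := hp_pos k; positivity
    · exact hp_pos k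
  have hdiff : relEnt u p - relEnt u p' = -η * ∑ k ∈ W, u k * c k
      - (∑ k ∈ W, u k) * log ((∑ k ∈ W, p k * exp (-η * c k)) / ∑ k ∈ W, p k) := by
    rw [relEnt_sub_relEnt u p p' (fun k ↦ (hp_pos k).ne') (fun k ↦ (hp'_pos k).ne'),
      sum_mul_log_div_of_reweight W hW u p _ p' (fun k _ ↦ hp_pos k) (fun k _ ↦ exp_pos _) hp',
      mul_sum]
    simp only [log_exp]
    congr 1
    exact sum_congr rfl fun k _ ↦ by ring
  have hlog := log_sum_mul_exp_neg_mul_div_le W hW p c (fun k _ ↦ hp_pos k) hc hη.le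
  have hmean : (∑ k ∈ W, u k) * ∑ k ∈ W, (u k / ∑ k' ∈ W, u k') * c k = ∑ k ∈ W, u k * c k := by
    rw [mul_sum]; exact sum_congr rfl fun k _ ↦ by field_simp
  rw [hdiff, ge_iff_le]
  linear_combination mul_le_mul_of_nonneg_left hlog huW.le - η * hmean

/-- Specialist Hedge potential inequality. -/
theorem specialist_hedge_potential {E : Type*} [Fintype E] [DecidableEq E]
    (η : ℝ) (hη : 0 < η)
    (W : Finset E) (hW : W.Nonempty)
    (p : E → ℝ) (hp_pos : ∀ k, 0 < p k) (hp_le : ∀ k, p k ≤ 1) (hp_sum : ∑ k, p k = 1)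
    (c : E → ℝ) (hc : ∀ k ∈ W, 0 ≤ c k ∧ c k ≤ 1)
    (u : E → ℝ) (hu_nonneg : ∀ k, 0 ≤ u k) (hu_le : ∀ k, u k ≤ 1) (hu_sum : ∑ k, u k = 1)
    (hu_pos : ∀ k, 0 < p k → 0 < u k)
    (huW : 0 < ∑ k ∈ W, u k)
    (p' : E → ℝ)
    (hp' : ∀ k, p' k = if k ∈ W then
        p k * Real.exp (-η * c k) * (∑ k' ∈ W, p k') /
          (∑ k' ∈ W, p k' * Real.exp (-η * c k'))
      else p k) :
    relEnt u p - relEnt u p' ≥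
      (∑ k ∈ W, u k) * η *
          ((∑ k ∈ W, (p k / ∑ k' ∈ W, p k') * c k)
            - ∑ k ∈ W, (u k / ∑ k' ∈ W, u k') * c k)
        - (∑ k ∈ W, u k) * η ^ 2 / 2 :=
  specialist_hedge_potential_general η hη W hW p hp_pos c hc u huW p' hp'
end
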